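/- arXiv:1602.01023 — 2 statements merged into one kernel-verified Lean document; each statement's English description precedes it below -/
import Mathlib

section
/- For α > -1/2 and β > -1, |P_n^{(α,β)}(cos(1/n))| ≍ n^α as n → ∞; i.e., there exist positive constants C₁, C₂ and n₀ with C₁ n^α ≤ |P_n^{(α,β)}(cos(1/n))| ≤ C₂ n^α for all n ≥ n₀. -/
/-!
For `0 < a + 1` the Jacobi polynomial is a terminating hypergeometric series,
`P_n^{(a,b)}(x) = (a+1)_n / n! · ₂F₁(-n, n + a + b + 1; a + 1; (1 - x) / 2)`.
At `x = cos (1 / n)` the argument is at most `1 / (4 n²)`, so once `n ≫ |a + b + 1|` the ratio of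
consecutive terms is at most `(3/5) / (k + 1)` (here `a > -1/2` bounds the denominators
`a + 1 + k` below by `1/2`), and the series lies within `e^{3/5} - 1 < 1` of `1`.
The prefactor satisfies `(a+1)_n / n! ~ n^a / Γ(a + 1)` by Euler's limit formula for `Γ`.
-/

open Real Set

/-- Jacobi polynomial `P_n^{(a,b)}` in the standard normalization. -/
noncomputable def jacobiP (a b : ℝ) (n : ℕ) (x : ℝ) : ℝ :=
  (Nat.factorial n : ℝ)⁻¹ *
    ∑ k ∈ Finset.range (n + 1),
      (Nat.choose n k : ℝ) * (ascPochhammer ℝ k).eval ((n : ℝ) + a + b + 1) *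
        (ascPochhammer ℝ (n - k)).eval (a + (k : ℝ) + 1) * ((x - 1) / 2) ^ k

/-- Pochhammer symbol `(q)_n` for real `q`. -/
noncomputable def poch (q : ℝ) (n : ℕ) : ℝ := (ascPochhammer ℝ n).eval q

open Filter Topology

lemma poch_zero (q : ℝ) : poch q 0 = 1 := by simp [poch]

lemma poch_succ (q : ℝ) (k : ℕ) : poch q (k + 1) = poch q k * (q + k) :=
  ascPochhammer_succ_eval k q

lemma poch_pos {q : ℝ} (hq : 0 < q) (k : ℕ) : 0 < poch q k := ascPochhammer_pos k q hq

lemma poch_add (q : ℝ) (m k : ℕ) : poch q (m + k) = poch q m * poch (q + m) k := by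
  simpa [poch, Polynomial.eval_comp] using
    (congrArg (Polynomial.eval q) (ascPochhammer_mul ℝ m k)).symm

lemma poch_mul_add_eq_prod_range (q : ℝ) (n : ℕ) :
    poch q n * (q + n) = ∏ j ∈ Finset.range (n + 1), (q + j) := by
  induction n with
  | zero => simp [poch_zero]
  | succ n ih => rw [Finset.prod_range_succ, ← ih, poch_succ]

lemma tendsto_poch_div_factorial_div_rpow {s : ℝ} (hs : Gamma s ≠ 0) :
    Tendsto (fun n : ℕ => poch s n / n.factorial / (n : ℝ) ^ (s - 1)) atTop
      (𝓝 (Gamma s)⁻¹) := by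
  have h := (tendsto_natCast_div_add_atTop s).mul ((GammaSeq_tendsto_Gamma s).inv₀ hs)
  rw [one_mul] at h
  refine h.congr' ?_
  filter_upwards [eventually_ge_atTop 1, tendsto_natCast_atTop_atTop.eventually_gt_atTop (-s)]
    with n hn hns
  have hn₀ : (0 : ℝ) < n := by exact_mod_cast hn
  have hns₀ : (n : ℝ) + s ≠ 0 := by linarith
  have hpow₀ : (n : ℝ) ^ s ≠ 0 := (rpow_pos_of_pos hn₀ s).ne'
  rw [GammaSeq, ← poch_mul_add_eq_prod_range, rpow_sub hn₀, rpow_one]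
  field_simp
  ring

/-- The `k`-th term of the hypergeometric series `₂F₁(-n, n + a + b + 1; a + 1; -t)`. -/
noncomputable def jacobiTerm (a b : ℝ) (n k : ℕ) (t : ℝ) : ℝ :=
  n.choose k * poch (n + a + b + 1) k / poch (a + 1) k * t ^ k

lemma jacobiP_eq_poch_mul_sum_jacobiTerm {a : ℝ} (b : ℝ) (ha : 0 < a + 1) (n : ℕ) (x : ℝ) :
    jacobiP a b n x
      = poch (a + 1) n / n.factorial *
          ∑ k ∈ Finset.range (n + 1), jacobiTerm a b n k ((x - 1) / 2) := by
  rw [jacobiP, Finset.mul_sum, Finset.mul_sum]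
  refine Finset.sum_congr rfl fun k hk => ?_
  have hkn : k + (n - k) = n := Nat.add_sub_cancel' (Finset.mem_range_succ_iff.mp hk)
  have hsplit := poch_add (a + 1) k (n - k)
  rw [hkn, add_right_comm] at hsplit
  have := (poch_pos ha k).ne'
  rw [hsplit]
  simp only [jacobiTerm, poch] at this ⊢
  field_simp

lemma jacobiTerm_zero (a b : ℝ) (n : ℕ) (t : ℝ) : jacobiTerm a b n 0 t = 1 := by
  simp [jacobiTerm, poch_zero]

lemma jacobiTerm_succ {a : ℝ} (b : ℝ) (ha : 0 < a + 1) (n k : ℕ) (t : ℝ) :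
    jacobiTerm a b n (k + 1) t = jacobiTerm a b n k t *
      ((n - k : ℕ) * (n + a + b + 1 + k) / ((k + 1) * (a + 1 + k)) * t) := by
  have hchoose : (n.choose (k + 1) : ℝ) * (k + 1) = n.choose k * (n - k : ℕ) := by
    exact_mod_cast Nat.choose_succ_right_eq n k
  have := (poch_pos ha k).ne'
  have : a + 1 + k ≠ 0 := by positivity
  rw [jacobiTerm, jacobiTerm, poch_succ, poch_succ, pow_succ,
    eq_div_of_mul_eq (by positivity) hchoose]
  field_simp

lemma abs_jacobiTerm_ratio_le {a b t : ℝ} {n k : ℕ} (ha : -(1 / 2) < a) (hk : k < n)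
    (hab : |a + b + 1| ≤ n / 10) (ht : |t| ≤ (1 / n) ^ 2 / 4) :
    |(n - k : ℕ) * (n + a + b + 1 + k) / ((k + 1) * (a + 1 + k)) * t| ≤ 3 / 5 / (k + 1) := by
  have hn : (0 : ℝ) < n := by exact_mod_cast (Nat.zero_le k).trans_lt hk
  have hkn : (k : ℝ) < n := by exact_mod_cast hk
  obtain ⟨hs₁, hs₂⟩ := abs_le.mp hab
  rw [Nat.cast_sub hk.le]
  -- AM-GM: `(n - k) (n + s + k) ≤ (n + s / 2) ^ 2` with `s = a + b + 1`, and `|s| ≤ n / 10`.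
  have hnum : (n - k) * (n + a + b + 1 + k) ≤ 441 / 400 * (n : ℝ) ^ 2 := by
    nlinarith [sq_nonneg (k + (a + b + 1) / 2)]
  have hden : ((k : ℝ) + 1) / 2 ≤ (k + 1) * (a + 1 + k) := by nlinarith
  have hden₀ : 0 < ((k : ℝ) + 1) * (a + 1 + k) := lt_of_lt_of_le (by positivity) hden
  have hnum₀ : 0 ≤ (n - k) * (n + a + b + 1 + (k : ℝ)) := by
    apply mul_nonneg <;> linarith
  rw [abs_mul, abs_of_nonneg (div_nonneg hnum₀ hden₀.le)]
  calc (n - k) * (n + a + b + 1 + k) / ((k + 1) * (a + 1 + k)) * |t|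
      ≤ 441 / 400 * (n : ℝ) ^ 2 / ((k + 1) / 2) * ((1 / n) ^ 2 / 4) := by gcongr
    _ = 441 / 800 / (k + 1) := by field_simp; ring
    _ ≤ 3 / 5 / (k + 1) := div_le_div_of_nonneg_right (by norm_num) (by positivity)

lemma abs_jacobiTerm_le {a b t : ℝ} {n : ℕ} (ha : -(1 / 2) < a) (hab : |a + b + 1| ≤ n / 10)
    (ht : |t| ≤ (1 / n) ^ 2 / 4) :
    ∀ k ≤ n, |jacobiTerm a b n k t| ≤ (3 / 5) ^ k / k.factorial
  | 0, _ => by simp [jacobiTerm_zero]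
  | k + 1, hk => by
    rw [jacobiTerm_succ b (by linarith) n k t, abs_mul]
    calc |jacobiTerm a b n k t| *
          |(n - k : ℕ) * (n + a + b + 1 + k) / ((k + 1) * (a + 1 + k)) * t|
        ≤ (3 / 5) ^ k / k.factorial * (3 / 5 / (k + 1)) :=
          mul_le_mul (abs_jacobiTerm_le ha hab ht k (by omega))
            (abs_jacobiTerm_ratio_le ha (by omega) hab ht) (abs_nonneg _) (by positivity)
      _ = (3 / 5) ^ (k + 1) / (k + 1).factorial := by
          rw [Nat.factorial_succ]; push_cast; field_simp; ring

lemma abs_sum_jacobiTerm_sub_one_le {a b t : ℝ} {n : ℕ} (ha : -(1 / 2) < a)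
    (hab : |a + b + 1| ≤ n / 10) (ht : |t| ≤ (1 / n) ^ 2 / 4) :
    |∑ k ∈ Finset.range (n + 1), jacobiTerm a b n k t - 1| ≤ exp (3 / 5) - 1 := by
  rw [Finset.sum_range_succ', jacobiTerm_zero, add_sub_cancel_right]
  calc |∑ k ∈ Finset.range n, jacobiTerm a b n (k + 1) t|
      ≤ ∑ k ∈ Finset.range n, |jacobiTerm a b n (k + 1) t| := Finset.abs_sum_le_sum_abs _ _
    _ ≤ ∑ k ∈ Finset.range n, (3 / 5 : ℝ) ^ (k + 1) / (k + 1).factorial :=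
        Finset.sum_le_sum fun k hk =>
          abs_jacobiTerm_le ha hab ht (k + 1) (Finset.mem_range.mp hk)
    _ = ∑ k ∈ Finset.range (n + 1), (3 / 5 : ℝ) ^ k / k.factorial - 1 := by
        rw [Finset.sum_range_succ' _ n]; simp
    _ ≤ exp (3 / 5) - 1 := by gcongr; exact sum_le_exp_of_nonneg (by norm_num) _

lemma exp_three_fifths_lt_two : exp (3 / 5) < 2 := by
  rw [← lt_log_iff_exp_lt two_pos]
  linarith [log_two_gt_d9]

lemma abs_cos_sub_one_div_two_le (x : ℝ) : |(cos x - 1) / 2| ≤ x ^ 2 / 4 := by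
  rw [abs_le]
  constructor <;> linarith [cos_le_one x, one_sub_sq_div_two_le_cos (x := x)]

theorem jacobiP_at_cos_inv_n_general (a b : ℝ) (ha : -(1 / 2 : ℝ) < a) :
    ∃ C₁ C₂ : ℝ, 0 < C₁ ∧ 0 < C₂ ∧ ∃ n₀ : ℕ, ∀ n : ℕ, n₀ ≤ n →
      C₁ * (n : ℝ) ^ a ≤ |jacobiP a b n (Real.cos (1 / n))| ∧
      |jacobiP a b n (Real.cos (1 / n))| ≤ C₂ * (n : ℝ) ^ a := by
  have ha₁ : 0 < a + 1 := by linarith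
  set L := (Gamma (a + 1))⁻¹
  have hL : 0 < L := inv_pos.mpr (Gamma_pos_of_pos ha₁)
  set δ := exp (3 / 5) - 1
  have hδ : δ < 1 := by linarith [exp_three_fifths_lt_two]
  refine ⟨L / 2 * (1 - δ), 2 * L * (1 + δ), by nlinarith, by nlinarith [exp_pos (3 / 5)], ?_⟩
  have hpoch := (tendsto_poch_div_factorial_div_rpow (Gamma_pos_of_pos ha₁).ne').eventually
    (Ioo_mem_nhds (half_lt_self hL) (lt_two_mul_self hL))
  have hlarge := tendsto_natCast_atTop_atTop.eventually_ge_atTop (10 * |a + b + 1|)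
  obtain ⟨n₀, hn₀⟩ := eventually_atTop.mp ((hpoch.and hlarge).and (eventually_ge_atTop 1))
  refine ⟨n₀, fun n hn => ?_⟩
  obtain ⟨⟨⟨hF₁, hF₂⟩, hab⟩, hn₁⟩ := hn₀ n hn
  rw [add_sub_cancel_right] at hF₁ hF₂
  have hna : 0 < (n : ℝ) ^ a := rpow_pos_of_pos (by exact_mod_cast hn₁) a
  have hS := abs_sum_jacobiTerm_sub_one_le (b := b) ha (by linarith)
    (abs_cos_sub_one_div_two_le (1 / n))
  set S := ∑ k ∈ Finset.range (n + 1), jacobiTerm a b n k ((cos (1 / n) - 1) / 2)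
  obtain ⟨hS₁, hS₂⟩ := abs_sub_le_iff.mp hS
  rw [lt_div_iff₀ hna] at hF₁
  rw [div_lt_iff₀ hna] at hF₂
  rw [jacobiP_eq_poch_mul_sum_jacobiTerm b ha₁, abs_mul, abs_of_pos (by linarith : 0 < S),
    abs_of_pos (div_pos (poch_pos ha₁ n) (by positivity))]
  constructor <;> nlinarith

theorem jacobiP_at_cos_inv_n (a b : ℝ) (ha : -(1 / 2 : ℝ) < a) (hb : -1 < b) :
    ∃ C₁ C₂ : ℝ, 0 < C₁ ∧ 0 < C₂ ∧ ∃ n₀ : ℕ, ∀ n : ℕ, n₀ ≤ n →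
      C₁ * (n : ℝ) ^ a ≤ |jacobiP a b n (Real.cos (1 / n))| ∧
      |jacobiP a b n (Real.cos (1 / n))| ≤ C₂ * (n : ℝ) ^ a :=
  jacobiP_at_cos_inv_n_general a b ha
end

section
/- Let λ > -1/2 and μ > 0. With C̃_{2n+1}^{(λ,μ)}(t) = ã_{2n+1}^{(λ,μ)} t P_n^{(λ-1/2, μ+1/2)}(2t² - 1), the value at t = 1 satisfies C̃_{2n+1}^{(λ,μ)}(1) ≳ n^λ as n → ∞; hence max_{t ∈ [-1,1]} |C̃_{2n+1}^{(λ,μ)}(t)| ≳ n^λ. -/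
open Real Set

/-- Normalization constant for odd orthonormal generalized Gegenbauer polynomials. -/
noncomputable def atilde2n1 (l m : ℝ) (n : ℕ) : ℝ :=
  (((2 * n + l + m + 1) * Real.Gamma (n + 1) * Real.Gamma (n + l + m + 1)) /
    (Real.Gamma (n + l + 1 / 2) * Real.Gamma (n + m + 3 / 2))) ^ ((1 : ℝ) / 2)

/-!
At `t = 1` the Jacobi polynomial reduces to `(λ + 1/2)_n / n! = Γ(n + λ + 1/2) / (Γ(λ + 1/2) n!)`.
Euler's limit formula for `Γ` gives `Γ(n + a) ~ n! n^(a - 1)`, so `ã_{2n+1} ~ √(2n)` and the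
value at `1` is asymptotic to `√2 n^λ / Γ(λ + 1/2)`; the maximum of `|C̃_{2n+1}|` on `[-1, 1]`
is at least this value.
-/

open Filter Asymptotics Topology
open scoped Nat

theorem Asymptotics.isEquivalent_add_const_of_tendsto_atTop {α : Type*} {l : Filter α}
    {u : α → ℝ} (hu : Tendsto u l atTop) (a : ℝ) : (fun x => u x + a) ~[l] u :=
  IsEquivalent.refl.add_isLittleO
    (isLittleO_const_left.2 (Or.inr (tendsto_norm_atTop_atTop.comp hu)))

theorem Asymptotics.IsEquivalent.eventually_half_le {α : Type*} {l : Filter α} {u v : α → ℝ}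
    (huv : u ~[l] v) (hv : ∀ᶠ x in l, 0 ≤ v x) : ∀ᶠ x in l, v x / 2 ≤ u x := by
  filter_upwards [huv.isLittleO.bound one_half_pos, hv] with x hx hvx
  rw [Pi.sub_apply, Real.norm_eq_abs, Real.norm_eq_abs, abs_of_nonneg hvx] at hx
  linarith [neg_abs_le (u x - v x)]

theorem ascPochhammer_eval_eq_prod_range {R : Type*} [CommSemiring R] (r : R) (n : ℕ) :
    (ascPochhammer R n).eval r = ∏ j ∈ Finset.range n, (r + j) := by
  induction n with
  | zero => simp
  | succ n ih =>
    rw [ascPochhammer_succ_right, Polynomial.eval_mul, ih, Finset.prod_range_succ]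
    simp

theorem ne_neg_natCast_of_pos {a : ℝ} (ha : 0 < a) (k : ℕ) : a ≠ -k :=
  ((neg_nonpos.2 k.cast_nonneg).trans_lt ha).ne'

namespace Real

theorem Gamma_add_nat_eq_ascPochhammer_mul {s : ℝ} (hs : ∀ k : ℕ, s ≠ -k) (n : ℕ) :
    Gamma (s + n) = (ascPochhammer ℝ n).eval s * Gamma s := by
  induction n with
  | zero => simp
  | succ n ih =>
    have hsn : s + n ≠ 0 := fun h => hs n (by linarith)
    rw [Nat.cast_succ, ← add_assoc, Gamma_add_one hsn, ih, ascPochhammer_succ_right,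
      Polynomial.eval_mul]
    simp only [Polynomial.eval_add, Polynomial.eval_X, Polynomial.eval_natCast]
    ring

theorem Gamma_nat_add_one_add_isEquivalent {a : ℝ} (ha : ∀ k : ℕ, a ≠ -k) :
    (fun n : ℕ => Gamma (n + 1 + a)) ~[atTop] fun n => n ! * (n : ℝ) ^ a := by
  have hGa : Gamma a ≠ 0 := Gamma_ne_zero ha
  -- Euler's limit formula, with `GammaSeq a n = n ^ a * n! * Γ a / Γ (a + n + 1)`
  refine isEquivalent_of_tendsto_one ?_
  have hlim : Tendsto ((fun _ => Gamma a) / GammaSeq a) atTop (𝓝 1) := by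
    simpa only [div_self hGa] using
      (tendsto_const_nhds (x := Gamma a)).div (GammaSeq_tendsto_Gamma a) hGa
  refine hlim.congr' ?_
  filter_upwards [eventually_gt_atTop 0] with n hn
  have hprod := Gamma_add_nat_eq_ascPochhammer_mul ha (n + 1)
  rw [ascPochhammer_eval_eq_prod_range] at hprod
  simp only [Pi.div_apply, GammaSeq]
  rw [show (n : ℝ) + 1 + a = a + (n + 1 : ℕ) by push_cast; ring, hprod]
  field_simp

theorem Gamma_nat_add_isEquivalent {a : ℝ} (ha : ∀ k : ℕ, a ≠ -k) :
    (fun n : ℕ => Gamma (n + a)) ~[atTop] fun n => n ! * (n : ℝ) ^ (a - 1) := by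
  have h := (Gamma_nat_add_one_add_isEquivalent ha).div
    (isEquivalent_add_const_of_tendsto_atTop tendsto_natCast_atTop_atTop a)
  refine (h.congr_left ?_).congr_right ?_
  · refine Eventually.of_forall fun n => ?_
    have hna : (n : ℝ) + a ≠ 0 := fun h => ha n (eq_neg_of_add_eq_zero_right h)
    simp only [Pi.div_apply]
    rw [add_right_comm, Gamma_add_one hna, mul_div_cancel_left₀ _ hna]
  · filter_upwards [eventually_gt_atTop 0] with n hn
    have hn' : (0 : ℝ) < n := by exact_mod_cast hn
    simp only [Pi.div_apply]
    rw [rpow_sub_one hn'.ne']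
    ring

end Real

theorem jacobiP_one (a b : ℝ) (n : ℕ) : jacobiP a b n 1 = poch (a + 1) n / n ! := by
  rw [jacobiP, Finset.sum_eq_single_of_mem 0 (by simp) fun k _ hk => by simp [hk], poch]
  simp [div_eq_inv_mul]

theorem jacobiP_one_isEquivalent (a b : ℝ) (ha : ∀ k : ℕ, a + 1 ≠ -k) :
    (fun n => jacobiP a b n 1) ~[atTop] fun n => (n : ℝ) ^ a / Gamma (a + 1) := by
  have h := (Gamma_nat_add_isEquivalent ha).div
    (IsEquivalent.refl (u := fun n : ℕ => Gamma (a + 1) * n !))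
  refine (h.congr_left (Eventually.of_forall fun n => ?_)).congr_right
    (Eventually.of_forall fun n => ?_)
  · have hG := Gamma_ne_zero ha
    simp only [Pi.div_apply, jacobiP_one, poch]
    rw [add_comm (n : ℝ), Gamma_add_nat_eq_ascPochhammer_mul ha]
    field_simp
  · have := n.factorial_pos
    simp only [Pi.div_apply, add_sub_cancel_right]
    field_simp

theorem atilde2n1_isEquivalent {l m : ℝ} (hl : -(1 / 2 : ℝ) < l) (hm : -(1 / 2 : ℝ) < m) :
    (fun n => atilde2n1 l m n) ~[atTop] fun n => (2 * n : ℝ) ^ (1 / 2 : ℝ) := by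
  have hΓ {a : ℝ} (ha : 0 < a) := Gamma_nat_add_isEquivalent (ne_neg_natCast_of_pos ha)
  have hL := isEquivalent_add_const_of_tendsto_atTop
    (tendsto_natCast_atTop_atTop.const_mul_atTop two_pos) (l + m + 1)
  have hE := ((hL.mul (hΓ one_pos)).mul (hΓ (a := l + m + 1) (by linarith))).div
    ((hΓ (a := l + 1 / 2) (by linarith)).mul (hΓ (a := m + 3 / 2) (by linarith)))
  refine ((hE.congr_right (w := fun n : ℕ => 2 * (n : ℝ)) ?_).rpow ?_).congr_left ?_
  · filter_upwards [eventually_gt_atTop 0] with n hn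
    have hn' : (0 : ℝ) < n := by exact_mod_cast hn
    have := n.factorial_pos
    simp only [Pi.div_apply, Pi.mul_apply, sub_self, rpow_zero]
    rw [show l + m + 1 - 1 = (l + 1 / 2 - 1) + (m + 3 / 2 - 1) by ring, rpow_add hn']
    field_simp
  · exact fun n => by positivity
  · refine Eventually.of_forall fun n => ?_
    simp only [atilde2n1, Pi.div_apply, Pi.mul_apply, Pi.pow_apply, add_assoc]

@[fun_prop]
theorem continuous_jacobiP (a b : ℝ) (n : ℕ) : Continuous (jacobiP a b n) := by
  unfold jacobiP
  fun_prop

theorem atilde2n1_mul_jacobiP_one_isEquivalent {l m : ℝ} (hl : -(1 / 2 : ℝ) < l)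
    (hm : -(1 / 2 : ℝ) < m) :
    (fun n => atilde2n1 l m n * jacobiP (l - 1 / 2) (m + 1 / 2) n 1) ~[atTop]
      fun n => √2 / Gamma (l + 1 / 2) * (n : ℝ) ^ l := by
  have hJ := jacobiP_one_isEquivalent (l - 1 / 2) (m + 1 / 2)
    (ne_neg_natCast_of_pos (by linarith : (0 : ℝ) < l - 1 / 2 + 1))
  refine ((atilde2n1_isEquivalent hl hm).mul hJ).congr_right ?_
  filter_upwards [eventually_gt_atTop 0] with n hn
  have hn' : (0 : ℝ) < n := by exact_mod_cast hn
  simp only [Pi.mul_apply]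
  rw [mul_rpow zero_le_two hn'.le, ← sqrt_eq_rpow, mul_assoc, ← mul_div_assoc,
    ← rpow_add hn', add_sub_cancel, show l - 1 / 2 + 1 = l + 1 / 2 by ring]
  ring

theorem odd_gegenbauer_value_at_one_lower_bound (l m : ℝ) (hl : -(1 / 2 : ℝ) < l)
    (hm : 0 < m) :
    ∃ c : ℝ, 0 < c ∧ ∃ n₀ : ℕ, ∀ n : ℕ, n₀ ≤ n →
      c * (n : ℝ) ^ l ≤ atilde2n1 l m n * 1 * jacobiP (l - 1 / 2) (m + 1 / 2) n (2 * 1 ^ 2 - 1) ∧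
      c * (n : ℝ) ^ l ≤
        sSup ((fun t : ℝ =>
            |atilde2n1 l m n * t * jacobiP (l - 1 / 2) (m + 1 / 2) n (2 * t ^ 2 - 1)|) ''
          Set.Icc (-1) 1) := by
  have hΓ : 0 < Gamma (l + 1 / 2) := Gamma_pos_of_pos (by linarith)
  obtain ⟨n₀, hn₀⟩ := eventually_atTop.1 <|
    (atilde2n1_mul_jacobiP_one_isEquivalent (m := m) hl (by linarith)).eventually_half_le
      (Eventually.of_forall fun n => by positivity)
  refine ⟨√2 / Gamma (l + 1 / 2) / 2, by positivity, n₀, fun n hn => ?_⟩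
  have hvalue : √2 / Gamma (l + 1 / 2) / 2 * (n : ℝ) ^ l ≤
      atilde2n1 l m n * 1 * jacobiP (l - 1 / 2) (m + 1 / 2) n (2 * 1 ^ 2 - 1) := by
    norm_num only [mul_one, one_pow]
    linarith [hn₀ n hn]
  refine ⟨hvalue, hvalue.trans ((le_abs_self _).trans ?_)⟩
  exact le_csSup (isCompact_Icc.bddAbove_image (by fun_prop)) ⟨1, by norm_num, rfl⟩
end
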